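/- Let R be a unital ring with involution * containing a nontrivial symmetric idempotent e, satisfying: (M1) xR = 0 implies x = 0. Let Δ : R → R be a *-reverse derivable map with Δ(e) = 0. Then Δ is additive on (1−e)Re: for all x₂₁, y₂₁ ∈ (1−e)Re, Δ(x₂₁ + y₂₁) = Δ(x₂₁) + Δ(y₂₁). -/

import Mathlib

/-!
Write `x, y ∈ (1 - e)Re`. Since `(1 - e + x)(e + y) = x + y`, the reverse derivation rule expands
`Δ(x + y)` through `Δ(1 - e + x)` and `Δ(e + y)`. Multiplying by the fixed points `e` and `1 - e`
(on which `Δ` vanishes) shows `Δ(1 - e + x) = Δ x` and `Δ(e + y) = Δ y`, and the cross terms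
collapse to `Δ(xy) = Δ 0 = 0`.
-/

def IsReverseDerivable {R : Type*} [Mul R] [Add R] (σ Δ : R → R) : Prop :=
  ∀ a b : R, Δ (a * b) = Δ b * σ a + σ b * Δ a

section Peirce

variable {R : Type*} [Ring R] {a b c x : R}

lemma mul_right_eq_self_of_eq_mul_mul (hb : IsIdempotentElem b) (hx : x = a * x * b) :
    x * b = x := by
  conv_lhs => rw [hx]
  rw [mul_assoc, hb.eq, ← hx]

lemma mul_left_eq_self_of_eq_mul_mul (ha : IsIdempotentElem a) (hx : x = a * x * b) :
    a * x = x := by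
  conv_lhs => rw [hx]
  rw [← mul_assoc, ← mul_assoc, ha.eq, ← hx]

lemma mul_left_eq_zero_of_eq_mul_mul (hca : c * a = 0) (hx : x = a * x * b) : c * x = 0 := by
  rw [hx, ← mul_assoc, ← mul_assoc, hca, zero_mul, zero_mul]

lemma mul_right_eq_zero_of_eq_mul_mul (hbc : b * c = 0) (hx : x = a * x * b) : x * c = 0 := by
  rw [hx, mul_assoc, hbc, mul_zero]

end Peirce

lemma map_one_of_antimul_involutive {R : Type*} [MulOneClass R] {σ : R → R}
    (hσinv : ∀ x, σ (σ x) = x) (hσmul : ∀ x y, σ (x * y) = σ y * σ x) : σ 1 = 1 := by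
  have h := hσmul (σ 1) 1
  rw [mul_one, hσinv] at h
  simpa using h.symm

namespace IsReverseDerivable

variable {R : Type*} [Ring R] {σ Δ : R → R} {a b e x y : R}

lemma map_zero (hΔ : IsReverseDerivable σ Δ) (hσ0 : σ 0 = 0) : Δ 0 = 0 := by
  simpa [hσ0] using hΔ 0 0

lemma map_mul_of_mul_eq_zero (hΔ : IsReverseDerivable σ Δ) (hσ0 : σ 0 = 0) (hab : a * b = 0) :
    Δ b * σ a + σ b * Δ a = 0 := by
  rw [← hΔ, hab, hΔ.map_zero hσ0]

lemma map_mul_of_fixed_left (hΔ : IsReverseDerivable σ Δ) (ha : σ a = a) (hΔa : Δ a = 0) :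
    Δ (a * b) = Δ b * a := by
  rw [hΔ, ha, hΔa, mul_zero, add_zero]

lemma map_mul_of_fixed_right (hΔ : IsReverseDerivable σ Δ) (ha : σ a = a) (hΔa : Δ a = 0) :
    Δ (b * a) = a * Δ b := by
  rw [hΔ, ha, hΔa, zero_mul, zero_add]

lemma map_one_sub (hΔ : IsReverseDerivable σ Δ) (hσ0 : σ 0 = 0) (he : IsIdempotentElem e)
    (hσe : σ e = e) (hσe' : σ (1 - e) = 1 - e) (hΔe : Δ e = 0) : Δ (1 - e) = 0 := by
  have hright : Δ (1 - e) * e = 0 := by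
    rw [← hΔ.map_mul_of_fixed_left hσe hΔe, he.mul_one_sub_self, hΔ.map_zero hσ0]
  have hleft : e * Δ (1 - e) = 0 := by
    rw [← hΔ.map_mul_of_fixed_right hσe hΔe, he.one_sub_mul_self, hΔ.map_zero hσ0]
  -- `Δ(1 - e) = Δ((1 - e)²) = 2 Δ(1 - e) - Δ(1 - e) e - e Δ(1 - e)`
  have h := hΔ (1 - e) (1 - e)
  rw [he.one_sub.eq, hσe', mul_sub, mul_one, hright, sub_zero, sub_mul, one_mul, hleft,
    sub_zero] at h
  exact left_eq_add.mp h

lemma map_idem_add (hΔ : IsReverseDerivable σ Δ) (he : IsIdempotentElem e) (hσe : σ e = e)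
    (hσe' : σ (1 - e) = 1 - e) (hΔe : Δ e = 0) (hΔe' : Δ (1 - e) = 0)
    (hy : y = (1 - e) * y * e) : Δ (e + y) = Δ y := by
  have hey : e * y = 0 := mul_left_eq_zero_of_eq_mul_mul he.mul_one_sub_self hy
  have hright : Δ (e + y) * e = 0 := by
    rw [← hΔ.map_mul_of_fixed_left hσe hΔe, mul_add, he.eq, hey, add_zero, hΔe]
  have hleft : Δ (e + y) * (1 - e) = Δ y := by
    rw [← hΔ.map_mul_of_fixed_left hσe' hΔe', mul_add, he.one_sub_mul_self, zero_add,
      mul_left_eq_self_of_eq_mul_mul he.one_sub hy]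
  rw [← hleft, mul_sub, mul_one, hright, sub_zero]

lemma map_one_sub_add (hΔ : IsReverseDerivable σ Δ) (he : IsIdempotentElem e) (hσe : σ e = e)
    (hσe' : σ (1 - e) = 1 - e) (hΔe : Δ e = 0) (hΔe' : Δ (1 - e) = 0)
    (hx : x = (1 - e) * x * e) : Δ (1 - e + x) = Δ x := by
  have hxe : x * (1 - e) = 0 := mul_right_eq_zero_of_eq_mul_mul he.mul_one_sub_self hx
  have hright : e * Δ (1 - e + x) = Δ x := by
    rw [← hΔ.map_mul_of_fixed_right hσe hΔe, add_mul, he.one_sub_mul_self, zero_add,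
      mul_right_eq_self_of_eq_mul_mul he hx]
  have hleft : (1 - e) * Δ (1 - e + x) = 0 := by
    rw [← hΔ.map_mul_of_fixed_right hσe' hΔe', add_mul, he.one_sub.eq, hxe, add_zero, hΔe']
  rw [← hright, ← sub_eq_zero, ← one_sub_mul, hleft]

lemma map_add_of_mem_peirce (hΔ : IsReverseDerivable σ Δ) (hσadd : ∀ x y, σ (x + y) = σ x + σ y)
    (he : IsIdempotentElem e) (hσe : σ e = e) (hσe' : σ (1 - e) = 1 - e) (hΔe : Δ e = 0)
    (hx : x = (1 - e) * x * e) (hy : y = (1 - e) * y * e) : Δ (x + y) = Δ x + Δ y := by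
  have hσ0 : σ 0 = 0 := _root_.map_zero (AddMonoidHom.mk' σ hσadd)
  have hΔe' : Δ (1 - e) = 0 := hΔ.map_one_sub hσ0 he hσe hσe' hΔe
  have hey : e * y = 0 := mul_left_eq_zero_of_eq_mul_mul he.mul_one_sub_self hy
  have hxy : x * y = 0 :=
    mul_left_eq_zero_of_eq_mul_mul (mul_right_eq_zero_of_eq_mul_mul he.mul_one_sub_self hx) hy
  have hprod : (1 - e + x) * (e + y) = x + y := by
    rw [add_mul, mul_add, mul_add, he.one_sub_mul_self,
      mul_left_eq_self_of_eq_mul_mul he.one_sub hy, mul_right_eq_self_of_eq_mul_mul he hx, hxy]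
    abel
  have hΔye : Δ y * e = 0 := by
    rw [← hΔ.map_mul_of_fixed_left hσe hΔe, hey, hΔ.map_zero hσ0]
  have heΔx : e * Δ x = Δ x := by
    rw [← hΔ.map_mul_of_fixed_right hσe hΔe, mul_right_eq_self_of_eq_mul_mul he hx]
  calc Δ (x + y) = Δ x + Δ y + (Δ y * σ x + σ y * Δ x) := by
        rw [← hprod, hΔ, hΔ.map_idem_add he hσe hσe' hΔe hΔe' hy,
          hΔ.map_one_sub_add he hσe hσe' hΔe hΔe' hx, hσadd, hσadd, hσe', hσe, mul_add, add_mul,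
          mul_sub, mul_one, hΔye, sub_zero, heΔx]
        abel
    _ = Δ x + Δ y := by rw [hΔ.map_mul_of_mul_eq_zero hσ0 hxy, add_zero]

end IsReverseDerivable

theorem delta_additive_on_R21_general {R : Type*} [Ring R]
    (σ : R → R)
    (hσadd : ∀ x y : R, σ (x + y) = σ x + σ y)
    (hσinv : ∀ x : R, σ (σ x) = x)
    (hσmul : ∀ x y : R, σ (x * y) = σ y * σ x)
    (e : R) (he : e * e = e) (hes : σ e = e)
    (Δ : R → R)
    (hΔ : ∀ a b : R, Δ (a * b) = Δ b * σ a + σ b * Δ a)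
    (hΔe : Δ e = 0) :
    ∀ x₂₁ y₂₁ : R, x₂₁ = (1 - e) * x₂₁ * e → y₂₁ = (1 - e) * y₂₁ * e →
      Δ (x₂₁ + y₂₁) = Δ x₂₁ + Δ y₂₁ := by
  intro x y hx hy
  have hσe' : σ (1 - e) = 1 - e := by
    have h := hσadd (1 - e) e
    rw [sub_add_cancel, map_one_of_antimul_involutive hσinv hσmul, hes] at h
    exact eq_sub_of_add_eq h.symm
  exact IsReverseDerivable.map_add_of_mem_peirce hΔ hσadd he hes hσe' hΔe hx hy

theorem delta_additive_on_R21 {R : Type*} [Ring R]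
    (σ : R → R)
    (hσadd : ∀ x y : R, σ (x + y) = σ x + σ y)
    (hσinv : ∀ x : R, σ (σ x) = x)
    (hσmul : ∀ x y : R, σ (x * y) = σ y * σ x)
    (e : R) (he : e * e = e) (hes : σ e = e) (he0 : e ≠ 0) (he1 : e ≠ 1)
    (hM1 : ∀ x : R, (∀ r : R, x * r = 0) → x = 0)
    (Δ : R → R)
    (hΔ : ∀ a b : R, Δ (a * b) = Δ b * σ a + σ b * Δ a)
    (hΔe : Δ e = 0) :
    ∀ x₂₁ y₂₁ : R, x₂₁ = (1 - e) * x₂₁ * e → y₂₁ = (1 - e) * y₂₁ * e →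
      Δ (x₂₁ + y₂₁) = Δ x₂₁ + Δ y₂₁ :=
  delta_additive_on_R21_general σ hσadd hσinv hσmul e he hes Δ hΔ hΔe
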